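/- For every n ≥ 3, the Godowski equation n-Go holds in every ortholattice admitting a strong set of states: for all a₁, …, aₙ, a₁ ≡γ aₙ = aₙ ≡γ a₁. -/

import Mathlib

/-!
If a state `m` gives the forward cycle `(a₁→a₂) ⊓ ⋯ ⊓ (aₙ→a₁)` the value `1`, then every
Sasaki hook `aᵢ → aᵢ₊₁` has value `1`, i.e. `m (aᵢ ⊓ aᵢ₊₁) = m aᵢ`, so `m aᵢ ≤ m aᵢ₊₁` all
around the cycle. Hence all `m aᵢ` are equal, and then every reversed hook `aᵢ₊₁ → aᵢ` has
value `1` as well. A strong set of states turns this into `a₁ ≡γ aₙ ≤ aₙ ≡γ a₁`; reversing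
the order of the `aᵢ` gives the other inequality.
-/

/-- An ortholattice: a bounded lattice with an orthocomplementation. -/
class Ortholattice (α : Type*) extends Lattice α, BoundedOrder α, Compl α where
  compl_compl : ∀ a : α, aᶜᶜ = a
  compl_le_compl : ∀ a b : α, a ≤ b → bᶜ ≤ aᶜ
  inf_compl_self : ∀ a : α, a ⊓ aᶜ = ⊥
  sup_compl_self : ∀ a : α, a ⊔ aᶜ = ⊤

/-- The Sasaki hook `a → b := a' ⊔ (a ⊓ b)`. -/
def sasaki {α : Type*} [Ortholattice α] (a b : α) : α := aᶜ ⊔ (a ⊓ b)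

/-- A state (probability measure) on an ortholattice. -/
def IsState {α : Type*} [Ortholattice α] (m : α → ℝ) : Prop :=
  (∀ a : α, 0 ≤ m a ∧ m a ≤ 1) ∧ m ⊤ = 1 ∧
    ∀ a b : α, a ≤ bᶜ → m (a ⊔ b) = m a + m b

/-- The Godowski identity `a₁ ≡γ aₙ = (a₁→a₂) ⊓ ⋯ ⊓ (aₙ₋₁→aₙ) ⊓ (aₙ→a₁)`,
as the meet over the forward cycle. -/
def goFwd {α : Type*} [Ortholattice α] (n : ℕ) (hn : 3 ≤ n) (a : Fin n → α) : α :=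
  Finset.univ.inf fun i : Fin n => sasaki (a i) (a (i + ⟨1, by omega⟩))

/-- The Godowski identity `aₙ ≡γ a₁ = (aₙ→aₙ₋₁) ⊓ ⋯ ⊓ (a₂→a₁) ⊓ (a₁→aₙ)`,
as the meet over the backward cycle. -/
def goBwd {α : Type*} [Ortholattice α] (n : ℕ) (hn : 3 ≤ n) (a : Fin n → α) : α :=
  Finset.univ.inf fun i : Fin n => sasaki (a (i + ⟨1, by omega⟩)) (a i)

theorem Equiv.Perm.apply_eq_of_forall_le_comp {ι M : Type*} [Fintype ι] [AddCommMonoid M]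
    [PartialOrder M] [IsOrderedCancelAddMonoid M] (σ : Equiv.Perm ι) {f : ι → M}
    (h : ∀ i, f i ≤ f (σ i)) (i : ι) : f i = f (σ i) :=
  (Finset.sum_eq_sum_iff_of_le fun i _ => h i).1 (Equiv.sum_comp σ f).symm i (Finset.mem_univ i)

theorem Finset.univ_inf_comp_equiv {ι α : Type*} [Fintype ι] [SemilatticeInf α] [OrderTop α]
    (e : ι ≃ ι) (f : ι → α) : Finset.univ.inf (fun i => f (e i)) = Finset.univ.inf f := by
  conv_rhs => rw [← Finset.map_univ_equiv e, Finset.inf_map]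
  rfl

namespace IsState

variable {α : Type*} [Ortholattice α] {m : α → ℝ}

theorem map_compl (hm : IsState m) (a : α) : m aᶜ = 1 - m a := by
  have h := hm.2.2 a aᶜ (by rw [Ortholattice.compl_compl])
  rw [Ortholattice.sup_compl_self, hm.2.1] at h
  linarith

theorem mono (hm : IsState m) {a b : α} (h : a ≤ b) : m a ≤ m b := by
  have h1 := hm.2.2 a bᶜ (by rwa [Ortholattice.compl_compl])
  have h2 := (hm.1 (a ⊔ bᶜ)).2
  rw [hm.map_compl] at h1
  linarith

theorem eq_one_of_le (hm : IsState m) {a b : α} (ha : m a = 1) (h : a ≤ b) : m b = 1 :=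
  le_antisymm (hm.1 b).2 (ha ▸ hm.mono h)

theorem map_sasaki (hm : IsState m) (a b : α) : m (sasaki a b) = 1 - m a + m (a ⊓ b) := by
  rw [sasaki, hm.2.2 aᶜ (a ⊓ b) (Ortholattice.compl_le_compl _ _ inf_le_left), hm.map_compl]

theorem map_sasaki_eq_one_iff (hm : IsState m) (a b : α) :
    m (sasaki a b) = 1 ↔ m (a ⊓ b) = m a := by
  rw [hm.map_sasaki]
  constructor <;> intro h <;> linarith

end IsState

section Godowski

variable {α : Type*} [Ortholattice α]

theorem goFwd_comp_neg (n : ℕ) (hn : 3 ≤ n) (a : Fin n → α) :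
    goFwd n hn (fun i => a (-i)) = goBwd n hn a := by
  have : NeZero n := ⟨by omega⟩
  set o : Fin n := ⟨1, by omega⟩
  rw [goFwd, goBwd, ← Finset.univ_inf_comp_equiv ((Equiv.addRight o).trans (Equiv.neg _))]
  congr! 3 with j <;> simp only [Equiv.trans_apply, Equiv.coe_addRight, Equiv.neg_apply] <;>
    congr 1 <;> abel

theorem goBwd_comp_neg (n : ℕ) (hn : 3 ≤ n) (a : Fin n → α) :
    goBwd n hn (fun i => a (-i)) = goFwd n hn a := by
  rw [← goFwd_comp_neg]
  simp only [neg_neg]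

theorem goFwd_le_goBwd {S : Set (α → ℝ)} (hS : ∀ m ∈ S, IsState m)
    (hstrong : ∀ a b : α, ∃ m ∈ S, ((m a = 1 → m b = 1) → a ≤ b))
    (n : ℕ) (hn : 3 ≤ n) (a : Fin n → α) :
    goFwd n hn a ≤ goBwd n hn a := by
  have : NeZero n := ⟨by omega⟩
  set o : Fin n := ⟨1, by omega⟩
  refine Finset.le_inf fun i _ => ?_
  obtain ⟨m, hmS, hle⟩ := hstrong (goFwd n hn a) (sasaki (a (i + o)) (a i))
  refine hle fun hfwd => ?_
  have hm := hS m hmS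
  have hinf : ∀ j, m (a j ⊓ a (j + o)) = m (a j) := fun j =>
    (hm.map_sasaki_eq_one_iff _ _).1 (hm.eq_one_of_le hfwd (Finset.inf_le (Finset.mem_univ j)))
  have hstep : ∀ j, m (a j) ≤ m (a (j + o)) := fun j =>
    (hinf j).symm.le.trans (hm.mono inf_le_right)
  rw [hm.map_sasaki_eq_one_iff, inf_comm, hinf i]
  exact (Equiv.addRight o).apply_eq_of_forall_le_comp (f := m ∘ a) hstep i

end Godowski

theorem stmt_8_general {α : Type*} [Ortholattice α] (S : Set (α → ℝ))
    (hS : ∀ m ∈ S, IsState m)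
    (hstrong : ∀ a b : α, ∃ m ∈ S, ((m a = 1 → m b = 1) → a ≤ b))
    (n : ℕ) (hn : 3 ≤ n) (a : Fin n → α) :
    goFwd n hn a = goBwd n hn a := by
  refine le_antisymm (goFwd_le_goBwd hS hstrong n hn a) ?_
  rw [← goFwd_comp_neg, ← goBwd_comp_neg n hn a]
  exact goFwd_le_goBwd hS hstrong n hn _

/-- For every `n ≥ 3`, the Godowski equation n-Go, `a₁ ≡γ aₙ = aₙ ≡γ a₁`, holds
in every ortholattice admitting a strong set of states. -/
theorem stmt_8 {α : Type*} [Ortholattice α] (S : Set (α → ℝ))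
    (hne : S.Nonempty) (hS : ∀ m ∈ S, IsState m)
    (hstrong : ∀ a b : α, ∃ m ∈ S, ((m a = 1 → m b = 1) → a ≤ b))
    (n : ℕ) (hn : 3 ≤ n) (a : Fin n → α) :
    goFwd n hn a = goBwd n hn a :=
  stmt_8_general S hS hstrong n hn a
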